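/- Let M₁, M₂ be incidence matrices of symmetric (v,k₁,λ₁) and (v,k₂,λ₂) designs with M₁M₂ᵀ + M₂M₁ᵀ = α(J − I), where α = 2k₁k₂/(v−1). Set Q = M₁M₂ᵀ + I. Then QQᵀ = σI + τJ with σ = (k₁−λ₁)(k₂−λ₂) − α + 1 and τ = vλ₁λ₂ + λ₂(k₁−λ₁) + λ₁(k₂−λ₂) + α, and moreover σ + vτ = (k₁k₂ + 1)². -/

import Mathlib

open Matrix

def IsDesign (v k l : ℕ) (N : Matrix (Fin v) (Fin v) ℤ) : Prop :=
  (∀ i j, N i j = 0 ∨ N i j = 1) ∧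
  Nᵀ * N = ((k : ℤ) - (l : ℤ)) • 1 + (l : ℤ) • Matrix.of (fun _ _ => (1 : ℤ)) ∧
  N * Nᵀ = ((k : ℤ) - (l : ℤ)) • 1 + (l : ℤ) • Matrix.of (fun _ _ => (1 : ℤ)) ∧
  k * (k - 1) = (v - 1) * l ∧
  (∀ i, ∑ j, N i j = (k : ℤ)) ∧ (∀ j, ∑ i, N i j = (k : ℤ))

/-!
Write `A = M₁M₂ᵀ`, so that `QQᵀ = M₁(M₂ᵀM₂)M₁ᵀ + (A + Aᵀ) + I`. The middle term is `α(J - I)` by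
hypothesis; in the first, `M₂ᵀM₂ = n₂I + λ₂J` and conjugating by `M₁` uses only `M₁M₁ᵀ = n₁I + λ₁J`
and `M₁J = k₁J`, where `nᵢ = kᵢ - λᵢ`. The parameter relation `k(k - 1) = (v - 1)λ` reads
`k² = n + vλ`, and this turns the coefficient of `J` into `τ`. For the second claim,
`σ + vτ = (n₁ + vλ₁)(n₂ + vλ₂) + 1 + α(v - 1) = k₁²k₂² + 1 + 2k₁k₂`.
-/

namespace Matrix

variable {n R : Type*} [Fintype n] [CommRing R]

local notation "J" => (Matrix.of fun _ _ => (1 : R) : Matrix n n R)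

theorem mul_of_one_of_sum_row {N : Matrix n n R} {k : R} (hrow : ∀ i, ∑ j, N i j = k) :
    N * J = k • J := by
  ext i j
  simp [mul_apply, hrow i]

theorem of_one_mul_transpose_of_sum_row {N : Matrix n n R} {k : R} (hrow : ∀ i, ∑ j, N i j = k) :
    J * Nᵀ = k • J := by
  ext i j
  simp [mul_apply, hrow j]

variable [DecidableEq n]

theorem mul_smul_one_add_smul_of_one_mul_transpose {N : Matrix n n R} {a b k : R}
    (hN : N * Nᵀ = a • 1 + b • J) (hrow : ∀ i, ∑ j, N i j = k) (c d : R) :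
    N * (c • 1 + d • J) * Nᵀ = (c * a) • 1 + (c * b + d * k ^ 2) • J := by
  have hJ : N * J * Nᵀ = k ^ 2 • J := by
    rw [mul_of_one_of_sum_row hrow, smul_mul, of_one_mul_transpose_of_sum_row hrow, smul_smul, sq]
  simp only [Matrix.mul_add, Matrix.add_mul, Matrix.mul_smul, Matrix.smul_mul, Matrix.mul_one, hN, hJ]
  module

theorem add_one_mul_transpose_add_one (A : Matrix n n R) :
    (A + 1) * (A + 1)ᵀ = A * Aᵀ + (A + Aᵀ) + 1 := by
  rw [transpose_add, transpose_one]
  noncomm_ring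

end Matrix

theorem IsDesign.sq_eq_sub_add_mul {v k l : ℕ} {N : Matrix (Fin v) (Fin v) ℤ} (hv : 1 ≤ v)
    (hN : IsDesign v k l N) : (k : ℤ) ^ 2 = (k - l) + v * l := by
  have hnum : ((k * (k - 1) : ℕ) : ℤ) = ((v - 1) * l : ℕ) := congrArg _ hN.2.2.2.1
  rcases Nat.eq_zero_or_pos k with rfl | hk
  · push_cast [Nat.cast_pred hv] at hnum
    linear_combination hnum
  · push_cast [Nat.cast_pred hk, Nat.cast_pred hv] at hnum
    linear_combination hnum

theorem design_decomposition_Q (v k1 k2 l1 l2 : ℕ) (hv : 2 ≤ v)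
    (M1 M2 : Matrix (Fin v) (Fin v) ℤ)
    (hM1 : IsDesign v k1 l1 M1) (hM2 : IsDesign v k2 l2 M2)
    (α : ℤ) (hα : α * ((v : ℤ) - 1) = 2 * (k1 : ℤ) * (k2 : ℤ))
    (hcross : M1 * M2ᵀ + M2 * M1ᵀ = α • (Matrix.of (fun _ _ => (1 : ℤ)) - 1)) :
    (M1 * M2ᵀ + 1) * (M1 * M2ᵀ + 1)ᵀ =
        (((k1 : ℤ) - l1) * ((k2 : ℤ) - l2) - α + 1) • 1 +
        ((v : ℤ) * l1 * l2 + (l2 : ℤ) * ((k1 : ℤ) - l1) + (l1 : ℤ) * ((k2 : ℤ) - l2) + α) •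
          Matrix.of (fun _ _ => (1 : ℤ)) ∧
    (((k1 : ℤ) - l1) * ((k2 : ℤ) - l2) - α + 1) +
        (v : ℤ) * ((v : ℤ) * l1 * l2 + (l2 : ℤ) * ((k1 : ℤ) - l1) + (l1 : ℤ) * ((k2 : ℤ) - l2) + α)
      = ((k1 : ℤ) * (k2 : ℤ) + 1) ^ 2 := by
  have hk1 := hM1.sq_eq_sub_add_mul (by omega)
  have hk2 := hM2.sq_eq_sub_add_mul (by omega)
  obtain ⟨-, -, hM1M1t, -, hrow1, -⟩ := hM1
  obtain ⟨-, hM2tM2, -, -, -, -⟩ := hM2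
  constructor
  · have hAAt : M1 * M2ᵀ * (M1 * M2ᵀ)ᵀ = M1 * (M2ᵀ * M2) * M1ᵀ := by
      simp only [transpose_mul, transpose_transpose, Matrix.mul_assoc]
    rw [add_one_mul_transpose_add_one, hAAt, hM2tM2,
      mul_smul_one_add_smul_of_one_mul_transpose hM1M1t hrow1, transpose_mul, transpose_transpose,
      hcross, hk1]
    module
  · linear_combination -(k2 : ℤ) ^ 2 * hk1 - ((k1 : ℤ) - l1 + v * l1) * hk2 + hα
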